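/- arXiv:2103.13530 — 3 statements merged into one kernel-verified Lean document; each statement's English description precedes it below -/
import Mathlib

section
/- For the relaxed battery profit-maximization problem with separate charge/discharge variables and without the complementarity constraint, if pi_t >= 0 for all t, then the transformed solution p^{*,b,+}_t = sigma^+ * max((sigma^+)^{-1} p'^{,b,+}_t - sigma^- p'^{,b,-}_t, 0) and p^{*,b,-}_t = (sigma^-)^{-1} * max(sigma^- p'^{,b,-}_t - (sigma^+)^{-1} p'^{,b,+}_t, 0), applied to any relaxed-optimal (p'^{,b,+}, p'^{,b,-}), satisfies: (i) the complementarity constraint p^{*,b,+}_t * p^{*,b,-}_t = 0 for all t, (ii) the same stored-energy trajectory, (iii) the power bounds, and (iv) an objective value no worse than the relaxed optimum. Hence the relaxed and original problems have equal optimal values: W'_i(pi) = W_i(pi). -/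
/-!
The state of charge sees a schedule only through its net stored-energy flow
`σm * p⁻ - σp⁻¹ * p⁺`. The transformed schedule realises the same flow with a single active
direction, so it keeps the state of charge and satisfies complementarity, and it uses no more
power than the relaxed one in either direction. Since `σp * σm ≤ 1`, cancelling simultaneous
charging and discharging can only raise the net power sold, so with nonnegative prices the
transformed schedule is again optimal for the relaxation while being feasible for the original
problem, and both problems attain the same minimum.
-/

open Finset

/-- State of charge of the lossy battery: `s 0 = s0` and
`s (t+1) = θ * s t + (σm * pm (t+1) - σp⁻¹ * pp (t+1)) * ΔT`. -/
noncomputable def lossySoc (θ σm σpinv ΔT s0 : ℝ) (pp pm : ℕ → ℝ) : ℕ → ℝ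
  | 0 => s0
  | (t+1) => θ * lossySoc θ σm σpinv ΔT s0 pp pm t
      + (σm * pm (t+1) - σpinv * pp (t+1)) * ΔT

section ComplementarySchedule

variable {σp σm : ℝ}

noncomputable def complDischarge (σp σm x y : ℝ) : ℝ := σp * max (σp⁻¹ * x - σm * y) 0

noncomputable def complCharge (σp σm x y : ℝ) : ℝ := σm⁻¹ * max (σm * y - σp⁻¹ * x) 0

theorem complDischarge_mul_complCharge (x y : ℝ) :
    complDischarge σp σm x y * complCharge σp σm x y = 0 := by
  unfold complDischarge complCharge
  rcases le_total (σp⁻¹ * x) (σm * y) with h | h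
  · rw [max_eq_right (sub_nonpos.mpr h)]; ring
  · rw [max_eq_right (sub_nonpos.mpr h)]; ring

theorem complCharge_sub_complDischarge (hσp : σp ≠ 0) (hσm : σm ≠ 0) (x y : ℝ) :
    σm * complCharge σp σm x y - σp⁻¹ * complDischarge σp σm x y = σm * y - σp⁻¹ * x := by
  unfold complDischarge complCharge
  rw [← mul_assoc, ← mul_assoc, mul_inv_cancel₀ hσm, inv_mul_cancel₀ hσp, one_mul, one_mul,
    ← neg_sub (σm * y), max_zero_sub_max_neg_zero_eq_self]

theorem complDischarge_nonneg (hσp : 0 ≤ σp) (x y : ℝ) : 0 ≤ complDischarge σp σm x y :=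
  mul_nonneg hσp (le_max_right _ _)

theorem complCharge_nonneg (hσm : 0 ≤ σm) (x y : ℝ) : 0 ≤ complCharge σp σm x y :=
  mul_nonneg (inv_nonneg.mpr hσm) (le_max_right _ _)

theorem complDischarge_le (hσp : 0 < σp) (hσm : 0 ≤ σm) {x y : ℝ} (hx : 0 ≤ x) (hy : 0 ≤ y) :
    complDischarge σp σm x y ≤ x := by
  have hmax : max (σp⁻¹ * x - σm * y) 0 ≤ σp⁻¹ * x :=
    max_le (sub_le_self _ (mul_nonneg hσm hy)) (by positivity)
  calc complDischarge σp σm x y ≤ σp * (σp⁻¹ * x) := mul_le_mul_of_nonneg_left hmax hσp.le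
    _ = x := by field_simp

theorem complCharge_le (hσp : 0 ≤ σp) (hσm : 0 < σm) {x y : ℝ} (hx : 0 ≤ x) (hy : 0 ≤ y) :
    complCharge σp σm x y ≤ y := by
  have hmax : max (σm * y - σp⁻¹ * x) 0 ≤ σm * y :=
    max_le (sub_le_self _ (by positivity)) (by positivity)
  calc complCharge σp σm x y ≤ σm⁻¹ * (σm * y) :=
        mul_le_mul_of_nonneg_left hmax (inv_nonneg.mpr hσm.le)
    _ = y := by field_simp

/-- Removing simultaneous charging and discharging raises the net power `x - y`, because a round
trip through the battery loses the fraction `1 - σp * σm` of the energy. -/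
theorem sub_le_complDischarge_sub_complCharge (hσp : 0 < σp) (hσm : 0 < σm)
    (hσ : σp * σm ≤ 1) {x y : ℝ} (hx : 0 ≤ x) (hy : 0 ≤ y) :
    x - y ≤ complDischarge σp σm x y - complCharge σp σm x y := by
  unfold complDischarge complCharge
  rcases le_total (σp⁻¹ * x) (σm * y) with h | h
  · rw [max_eq_right (sub_nonpos.mpr h), max_eq_left (sub_nonneg.mpr h)]
    have hx' : x ≤ (σp * σm)⁻¹ * x :=
      le_mul_of_one_le_left hx ((one_le_inv₀ (by positivity)).mpr hσ)
    have hid : σm⁻¹ * (σm * y - σp⁻¹ * x) = y - (σp * σm)⁻¹ * x := by field_simp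
    rw [hid]
    linarith
  · rw [max_eq_left (sub_nonneg.mpr h), max_eq_right (sub_nonpos.mpr h)]
    have hy' : σp * σm * y ≤ y := mul_le_of_le_one_left hy hσ
    have hid : σp * (σp⁻¹ * x - σm * y) = x - σp * σm * y := by field_simp
    rw [hid]
    linarith

end ComplementarySchedule

theorem lossySoc_congr_of_net_eq {θ σm σpinv ΔT s0 : ℝ} {pp₁ pm₁ pp₂ pm₂ : ℕ → ℝ}
    (hnet : ∀ t, σm * pm₁ t - σpinv * pp₁ t = σm * pm₂ t - σpinv * pp₂ t) (t : ℕ) :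
    lossySoc θ σm σpinv ΔT s0 pp₁ pm₁ t = lossySoc θ σm σpinv ΔT s0 pp₂ pm₂ t := by
  induction t with
  | zero => rfl
  | succ n ih => simp only [lossySoc, ih, hnet]

theorem sInf_restricted_eq_of_minimizer {α β γ : Type*} [ConditionallyCompleteLinearOrder γ]
    (f : α → β → γ) {P Q : α → β → Prop} (hQP : ∀ a b, Q a b → P a b) {a : α} {b : β}
    (hab : Q a b) (hmin : ∀ c d, P c d → f a b ≤ f c d) :
    sInf {x | ∃ c d, Q c d ∧ x = f c d} = sInf {x | ∃ c d, P c d ∧ x = f c d} := by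
  have hQ : IsLeast {x | ∃ c d, Q c d ∧ x = f c d} (f a b) :=
    ⟨⟨a, b, hab, rfl⟩, by rintro _ ⟨c, d, hcd, rfl⟩; exact hmin c d (hQP c d hcd)⟩
  have hP : IsLeast {x | ∃ c d, P c d ∧ x = f c d} (f a b) :=
    ⟨⟨a, b, hQP a b hab, rfl⟩, by rintro _ ⟨c, d, hcd, rfl⟩; exact hmin c d hcd⟩
  rw [hQ.csInf_eq, hP.csInf_eq]

theorem relaxed_battery_equal_value_general
    (T : ℕ) (ΔT θ σp σm Sbar s0 : ℝ) (Pbarp Pbarm : ℕ → ℝ)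
    (pi : ℕ → ℝ)
    (hσp0 : 0 < σp) (hσp1 : σp ≤ 1) (hσm0 : 0 < σm) (hσm1 : σm ≤ 1)
    (hpi : ∀ t, 0 ≤ pi t)
    (FeasRel Feas : (ℕ → ℝ) → (ℕ → ℝ) → Prop)
    (hFeasRel : ∀ pp pm, FeasRel pp pm ↔
      ((∀ t, 1 ≤ t → t ≤ T → 0 ≤ pp t ∧ pp t ≤ Pbarp t ∧ 0 ≤ pm t ∧ pm t ≤ Pbarm t) ∧
       (∀ t, t ≤ T → 0 ≤ lossySoc θ σm σp⁻¹ ΔT s0 pp pm t ∧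
          lossySoc θ σm σp⁻¹ ΔT s0 pp pm t ≤ Sbar)))
    (hFeas : ∀ pp pm, Feas pp pm ↔
      (FeasRel pp pm ∧ ∀ t, 1 ≤ t → t ≤ T → pp t * pm t = 0))
    (obj : (ℕ → ℝ) → (ℕ → ℝ) → ℝ)
    (hobj : ∀ pp pm, obj pp pm = -∑ t ∈ Finset.Icc 1 T, pi t * (pp t - pm t))
    (pp' pm' : ℕ → ℝ)
    (hfeas' : FeasRel pp' pm')
    (hopt' : ∀ rp rm, FeasRel rp rm → obj pp' pm' ≤ obj rp rm)
    (pps ppm : ℕ → ℝ)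
    (hpps : ∀ t, pps t = σp * max (σp⁻¹ * pp' t - σm * pm' t) 0)
    (hppm : ∀ t, ppm t = σm⁻¹ * max (σm * pm' t - σp⁻¹ * pp' t) 0) :
    (∀ t, pps t * ppm t = 0) ∧
    (∀ t, lossySoc θ σm σp⁻¹ ΔT s0 pps ppm t = lossySoc θ σm σp⁻¹ ΔT s0 pp' pm' t) ∧
    (∀ t, 1 ≤ t → t ≤ T → 0 ≤ pps t ∧ pps t ≤ Pbarp t ∧ 0 ≤ ppm t ∧ ppm t ≤ Pbarm t) ∧
    obj pps ppm ≤ obj pp' pm' ∧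
    sInf {x : ℝ | ∃ pp pm, Feas pp pm ∧ x = obj pp pm}
      = sInf {x : ℝ | ∃ pp pm, FeasRel pp pm ∧ x = obj pp pm} := by
  replace hpps : ∀ t, pps t = complDischarge σp σm (pp' t) (pm' t) := hpps
  replace hppm : ∀ t, ppm t = complCharge σp σm (pp' t) (pm' t) := hppm
  obtain ⟨hbnd', hsoc'⟩ := (hFeasRel pp' pm').mp hfeas'
  have hcomp t : pps t * ppm t = 0 := by
    rw [hpps, hppm]; exact complDischarge_mul_complCharge _ _
  have hsoc : ∀ t, lossySoc θ σm σp⁻¹ ΔT s0 pps ppm t = lossySoc θ σm σp⁻¹ ΔT s0 pp' pm' t :=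
    lossySoc_congr_of_net_eq fun t => by
      rw [hpps, hppm]; exact complCharge_sub_complDischarge hσp0.ne' hσm0.ne' (pp' t) (pm' t)
  have hbnd t (h1 : 1 ≤ t) (h2 : t ≤ T) :
      0 ≤ pps t ∧ pps t ≤ Pbarp t ∧ 0 ≤ ppm t ∧ ppm t ≤ Pbarm t := by
    obtain ⟨hp0, hp1, hm0, hm1⟩ := hbnd' t h1 h2
    rw [hpps, hppm]
    exact ⟨complDischarge_nonneg hσp0.le _ _, (complDischarge_le hσp0 hσm0.le hp0 hm0).trans hp1,
      complCharge_nonneg hσm0.le _ _, (complCharge_le hσp0.le hσm0 hp0 hm0).trans hm1⟩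
  have hobj_le : obj pps ppm ≤ obj pp' pm' := by
    rw [hobj, hobj, neg_le_neg_iff]
    refine sum_le_sum fun t ht => mul_le_mul_of_nonneg_left ?_ (hpi t)
    obtain ⟨hp0, -, hm0, -⟩ := hbnd' t (mem_Icc.mp ht).1 (mem_Icc.mp ht).2
    rw [hpps, hppm]
    exact sub_le_complDischarge_sub_complCharge hσp0 hσm0 (mul_le_one₀ hσp1 hσm0.le hσm1) hp0 hm0
  have hfeasR := (hFeasRel pps ppm).mpr ⟨hbnd, fun t ht => hsoc t ▸ hsoc' t ht⟩
  refine ⟨hcomp, hsoc, hbnd, hobj_le, ?_⟩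
  exact sInf_restricted_eq_of_minimizer obj (fun c d h => ((hFeas c d).mp h).1)
    ((hFeas pps ppm).mpr ⟨hfeasR, fun t _ _ => hcomp t⟩) fun c d h => hobj_le.trans (hopt' c d h)

/-- For the relaxed battery problem with nonnegative prices, the transformed
solution satisfies complementarity, preserves the stored-energy trajectory and the power
bounds, and has objective no worse than the relaxed optimum; hence the relaxed and
original problems have equal optimal values. -/
theorem relaxed_battery_equal_value
    (T : ℕ) (ΔT θ σp σm Sbar s0 : ℝ) (Pbarp Pbarm : ℕ → ℝ)
    (pi : ℕ → ℝ)
    (hσp0 : 0 < σp) (hσp1 : σp ≤ 1) (hσm0 : 0 < σm) (hσm1 : σm ≤ 1)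
    (hθ0 : 0 ≤ θ) (hθ1 : θ < 1) (hΔT : 0 < ΔT)
    (hpi : ∀ t, 0 ≤ pi t)
    (FeasRel Feas : (ℕ → ℝ) → (ℕ → ℝ) → Prop)
    (hFeasRel : ∀ pp pm, FeasRel pp pm ↔
      ((∀ t, 1 ≤ t → t ≤ T → 0 ≤ pp t ∧ pp t ≤ Pbarp t ∧ 0 ≤ pm t ∧ pm t ≤ Pbarm t) ∧
       (∀ t, t ≤ T → 0 ≤ lossySoc θ σm σp⁻¹ ΔT s0 pp pm t ∧
          lossySoc θ σm σp⁻¹ ΔT s0 pp pm t ≤ Sbar)))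
    (hFeas : ∀ pp pm, Feas pp pm ↔
      (FeasRel pp pm ∧ ∀ t, 1 ≤ t → t ≤ T → pp t * pm t = 0))
    (obj : (ℕ → ℝ) → (ℕ → ℝ) → ℝ)
    (hobj : ∀ pp pm, obj pp pm = -∑ t ∈ Finset.Icc 1 T, pi t * (pp t - pm t))
    (pp' pm' : ℕ → ℝ)
    (hfeas' : FeasRel pp' pm')
    (hopt' : ∀ rp rm, FeasRel rp rm → obj pp' pm' ≤ obj rp rm)
    (pps ppm : ℕ → ℝ)
    (hpps : ∀ t, pps t = σp * max (σp⁻¹ * pp' t - σm * pm' t) 0)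
    (hppm : ∀ t, ppm t = σm⁻¹ * max (σm * pm' t - σp⁻¹ * pp' t) 0) :
    (∀ t, pps t * ppm t = 0) ∧
    (∀ t, lossySoc θ σm σp⁻¹ ΔT s0 pps ppm t = lossySoc θ σm σp⁻¹ ΔT s0 pp' pm' t) ∧
    (∀ t, 1 ≤ t → t ≤ T → 0 ≤ pps t ∧ pps t ≤ Pbarp t ∧ 0 ≤ ppm t ∧ ppm t ≤ Pbarm t) ∧
    obj pps ppm ≤ obj pp' pm' ∧
    sInf {x : ℝ | ∃ pp pm, Feas pp pm ∧ x = obj pp pm}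
      = sInf {x : ℝ | ∃ pp pm, FeasRel pp pm ∧ x = obj pp pm} :=
  relaxed_battery_equal_value_general T ΔT θ σp σm Sbar s0 Pbarp Pbarm pi hσp0 hσp1 hσm0 hσm1 hpi
    FeasRel Feas hFeasRel hFeas obj hobj pp' pm' hfeas' hopt' pps ppm hpps hppm
end

section
/- In the lossy battery setting with round-trip efficiency sigma^+ * sigma^- < 1 and strictly positive prices pi_t > 0 for all t, every optimal solution of the relaxed battery profit-maximization problem (without the complementarity constraint) already satisfies the complementarity constraint p^{b,+}_t * p^{b,-}_t = 0 for all t; i.e., the relaxation is exact. -/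
open Finset

/-!
If a profile charges and discharges simultaneously at `t₀`, lower the charge there by
`ε = min (pp t₀) (pm t₀)` and the discharge by `σp σm ε`. The net energy flow into the store,
`σm pm - σp⁻¹ pp`, is unchanged, so the whole state-of-charge trajectory and hence feasibility
are preserved, while the net discharge `pp - pm` grows by `(1 - σp σm) ε > 0`. With a positive
price this strictly lowers the objective, contradicting optimality.
-/

theorem lossySoc_congr {θ σm σpinv ΔT s0 : ℝ} {pp pm rp rm : ℕ → ℝ}
    (h : ∀ t, σm * rm t - σpinv * rp t = σm * pm t - σpinv * pp t) :
    lossySoc θ σm σpinv ΔT s0 rp rm = lossySoc θ σm σpinv ΔT s0 pp pm := by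
  funext t
  induction t with
  | zero => rfl
  | succ t ih => simp only [lossySoc, ih, h]

theorem lossySoc_update_sub {θ σp σm ΔT s0 : ℝ} (hσp : σp ≠ 0) (pp pm : ℕ → ℝ) (t₀ : ℕ)
    (ε : ℝ) :
    lossySoc θ σm σp⁻¹ ΔT s0 (Function.update pp t₀ (pp t₀ - σp * σm * ε))
        (Function.update pm t₀ (pm t₀ - ε)) =
      lossySoc θ σm σp⁻¹ ΔT s0 pp pm := by
  refine lossySoc_congr fun t => ?_
  rcases eq_or_ne t t₀ with rfl | ht
  · simp only [Function.update_self]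
    field_simp
    ring
  · simp only [Function.update_of_ne ht]

theorem Function.update_sub_mem_Icc {ι : Type*} [DecidableEq ι] {p P : ι → ℝ} {t₀ t : ι}
    {δ : ℝ} (h : p t ∈ Set.Icc 0 (P t)) (hδ : δ ∈ Set.Icc 0 (p t₀)) :
    Function.update p t₀ (p t₀ - δ) t ∈ Set.Icc 0 (P t) := by
  rcases eq_or_ne t t₀ with rfl | ht
  · rw [Function.update_self]
    exact ⟨by linarith [hδ.2], by linarith [hδ.1, h.2]⟩
  · rwa [Function.update_of_ne ht]

theorem Finset.sum_mul_sub_update {ι : Type*} [DecidableEq ι] {s : Finset ι} {t₀ : ι}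
    (ht₀ : t₀ ∈ s) (w p q : ι → ℝ) (a b : ℝ) :
    ∑ t ∈ s, w t * (Function.update p t₀ a t - Function.update q t₀ b t) =
      ∑ t ∈ s, w t * (p t - q t) + w t₀ * ((a - p t₀) - (b - q t₀)) := by
  have hsummand : (fun t => w t * (Function.update p t₀ a t - Function.update q t₀ b t)) =
      Function.update (fun t => w t * (p t - q t)) t₀ (w t₀ * (a - b)) := by
    funext t
    rcases eq_or_ne t t₀ with rfl | ht
    · simp only [Function.update_self]
    · simp only [Function.update_of_ne ht]
  rw [hsummand, Finset.sum_update_of_mem ht₀, Finset.sum_eq_add_sum_sdiff_singleton_of_mem ht₀]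
  ring

theorem relaxation_exact_general
    (T : ℕ) (ΔT θ σp σm Sbar s0 : ℝ) (Pbarp Pbarm : ℕ → ℝ)
    (pi : ℕ → ℝ)
    (hσp0 : 0 < σp) (hσm0 : 0 < σm)
    (hlossy : σp * σm < 1)
    (hpi : ∀ t, 1 ≤ t → t ≤ T → 0 < pi t)
    (FeasRel : (ℕ → ℝ) → (ℕ → ℝ) → Prop)
    (hFeasRel : ∀ pp pm, FeasRel pp pm ↔
      ((∀ t, 1 ≤ t → t ≤ T → 0 ≤ pp t ∧ pp t ≤ Pbarp t ∧ 0 ≤ pm t ∧ pm t ≤ Pbarm t) ∧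
       (∀ t, t ≤ T → 0 ≤ lossySoc θ σm σp⁻¹ ΔT s0 pp pm t ∧
          lossySoc θ σm σp⁻¹ ΔT s0 pp pm t ≤ Sbar)))
    (obj : (ℕ → ℝ) → (ℕ → ℝ) → ℝ)
    (hobj : ∀ pp pm, obj pp pm = -∑ t ∈ Finset.Icc 1 T, pi t * (pp t - pm t))
    (pp pm : ℕ → ℝ)
    (hfeas : FeasRel pp pm)
    (hopt : ∀ rp rm, FeasRel rp rm → obj pp pm ≤ obj rp rm) :
    ∀ t, 1 ≤ t → t ≤ T → pp t * pm t = 0 := by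
  intro t₀ ht₁ htT
  by_contra hne
  obtain ⟨hbox, hsoc⟩ := (hFeasRel pp pm).1 hfeas
  obtain ⟨hpp_ne, hpm_ne⟩ := mul_ne_zero_iff.1 hne
  have hpp : 0 < pp t₀ := lt_of_le_of_ne (hbox t₀ ht₁ htT).1 (Ne.symm hpp_ne)
  have hpm : 0 < pm t₀ := lt_of_le_of_ne (hbox t₀ ht₁ htT).2.2.1 (Ne.symm hpm_ne)
  set ε := min (pp t₀) (pm t₀)
  have hε : 0 < ε := lt_min hpp hpm
  have hδp : σp * σm * ε ∈ Set.Icc 0 (pp t₀) :=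
    ⟨by positivity, (mul_le_of_le_one_left hε.le hlossy.le).trans (min_le_left _ _)⟩
  have hδm : ε ∈ Set.Icc 0 (pm t₀) := ⟨hε.le, min_le_right _ _⟩
  set rp := Function.update pp t₀ (pp t₀ - σp * σm * ε)
  set rm := Function.update pm t₀ (pm t₀ - ε)
  have hfeas' : FeasRel rp rm := by
    refine (hFeasRel rp rm).2 ⟨fun t h₁ hT => ?_, by rw [lossySoc_update_sub hσp0.ne']; exact hsoc⟩
    obtain ⟨hp₀, hpP, hm₀, hmP⟩ := hbox t h₁ hT
    obtain ⟨hrp₀, hrpP⟩ := Function.update_sub_mem_Icc ⟨hp₀, hpP⟩ hδp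
    obtain ⟨hrm₀, hrmP⟩ := Function.update_sub_mem_Icc ⟨hm₀, hmP⟩ hδm
    exact ⟨hrp₀, hrpP, hrm₀, hrmP⟩
  have hgain : 0 < pi t₀ * ((1 - σp * σm) * ε) :=
    mul_pos (hpi t₀ ht₁ htT) (mul_pos (sub_pos.2 hlossy) hε)
  have hle := hopt rp rm hfeas'
  rw [hobj, hobj, Finset.sum_mul_sub_update (Finset.mem_Icc.2 ⟨ht₁, htT⟩)] at hle
  linarith

/-- With strictly lossy round-trip efficiency `σp * σm < 1` and strictly
positive prices, every optimal solution of the relaxed battery problem (without the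
complementarity constraint) already satisfies `pp t * pm t = 0`; the relaxation is exact. -/
theorem relaxation_exact
    (T : ℕ) (ΔT θ σp σm Sbar s0 : ℝ) (Pbarp Pbarm : ℕ → ℝ)
    (pi : ℕ → ℝ)
    (hσp0 : 0 < σp) (hσp1 : σp ≤ 1) (hσm0 : 0 < σm) (hσm1 : σm ≤ 1)
    (hlossy : σp * σm < 1)
    (hθ0 : 0 ≤ θ) (hθ1 : θ < 1) (hΔT : 0 < ΔT)
    (hpi : ∀ t, 1 ≤ t → t ≤ T → 0 < pi t)
    (FeasRel : (ℕ → ℝ) → (ℕ → ℝ) → Prop)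
    (hFeasRel : ∀ pp pm, FeasRel pp pm ↔
      ((∀ t, 1 ≤ t → t ≤ T → 0 ≤ pp t ∧ pp t ≤ Pbarp t ∧ 0 ≤ pm t ∧ pm t ≤ Pbarm t) ∧
       (∀ t, t ≤ T → 0 ≤ lossySoc θ σm σp⁻¹ ΔT s0 pp pm t ∧
          lossySoc θ σm σp⁻¹ ΔT s0 pp pm t ≤ Sbar)))
    (obj : (ℕ → ℝ) → (ℕ → ℝ) → ℝ)
    (hobj : ∀ pp pm, obj pp pm = -∑ t ∈ Finset.Icc 1 T, pi t * (pp t - pm t))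
    (pp pm : ℕ → ℝ)
    (hfeas : FeasRel pp pm)
    (hopt : ∀ rp rm, FeasRel rp rm → obj pp pm ≤ obj rp rm) :
    ∀ t, 1 ≤ t → t ≤ T → pp t * pm t = 0 :=
  relaxation_exact_general T ΔT θ σp σm Sbar s0 Pbarp Pbarm pi hσp0 hσm0 hlossy hpi FeasRel hFeasRel
    obj hobj pp pm hfeas hopt
end

section
/- In the extended battery model with efficiencies and self-discharge, the optimal price satisfies, for every battery i and time t, the relation theta * pi*_{t+1} - pi*_t = theta * lambda^{*,b,+}_{i,t+1} - lambda^{*,b,+}_{i,t} + Delta T * (sigma^+)^{-1} * lambda^{*,c}_{i,t}, and also theta * pi*_{t+1} - pi*_t = lambda^{*,b,-}_{i,t} - theta * lambda^{*,b,-}_{i,t+1} + Delta T * sigma^- * lambda^{*,c}_{i,t}, where lambda^{b,+}, lambda^{b,-}, lambda^c are duals of the discharge power, charge power, and capacity constraints. In particular, if at an optimum the battery charges with all power and capacity constraints non-binding at times t and t+1, then pi*_{t+1} = theta^{-1} pi*_t. -/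
open Finset

/-!
Peeling the first term off the discounted tail sum `∑_{τ ≥ t} θ^(τ-t) λᶜ_τ` gives
`λᶜ_t + θ ∑_{τ ≥ t+1} θ^(τ-t-1) λᶜ_τ`, so in `θ π_{t+1} - π_t` the two tail sums cancel and
only the local terms survive. When those vanish, `θ π_{t+1} = π_t`.
-/

theorem sum_Ico_pow_sub_mul_eq_add_mul {R : Type*} [CommSemiring R] (θ : R) (f : ℕ → R)
    {t T : ℕ} (ht : t < T) :
    ∑ τ ∈ Ico t T, θ ^ (τ - t) * f τ
      = f t + θ * ∑ τ ∈ Ico (t + 1) T, θ ^ (τ - (t + 1)) * f τ := by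
  rw [sum_eq_sum_Ico_succ_bot ht, Nat.sub_self, pow_zero, one_mul, mul_sum]
  congr 1
  refine sum_congr rfl fun τ hτ => ?_
  rw [show τ - t = τ - (t + 1) + 1 by grind, pow_succ]
  ring

theorem discounted_stationarity_step {R : Type*} [CommRing R] {T t : ℕ} (c θ : R)
    {p a l : ℕ → R} (hp : ∀ t, t < T → p t = a t - c * ∑ τ ∈ Ico t T, θ ^ (τ - t) * l τ)
    (ht : t + 1 < T) :
    θ * p (t + 1) - p t = θ * a (t + 1) - a t + c * l t := by
  rw [hp t (by omega), hp (t + 1) ht, sum_Ico_pow_sub_mul_eq_add_mul θ l (by omega : t < T)]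
  ring

/-- In the extended battery model with efficiencies and self-discharge, the
stationarity conditions imply the price relations
`θ * pi (t+1) - pi t = θ * lbp i (t+1) - lbp i t + ΔT * σp⁻¹ * lc i t` and
`θ * pi (t+1) - pi t = lbm i t - θ * lbm i (t+1) + ΔT * σm * lc i t`; in particular, if
all relevant duals vanish (non-binding constraints while charging) at `t` and `t+1`, then
`pi (t+1) = θ⁻¹ * pi t`. -/
theorem extended_price_recursion
    {B : Type*} (T : ℕ) (ΔT θ σp σm : ℝ) (hθ : 0 < θ)
    (pi : ℕ → ℝ) (lbp lbm lc : B → ℕ → ℝ)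
    (hstatp : ∀ (i : B) (t : ℕ), t < T →
      pi t = lbp i t - ΔT * σp⁻¹ * ∑ τ ∈ Finset.Ico t T, θ ^ (τ - t) * lc i τ)
    (hstatm : ∀ (i : B) (t : ℕ), t < T →
      pi t = -lbm i t - ΔT * σm * ∑ τ ∈ Finset.Ico t T, θ ^ (τ - t) * lc i τ) :
    ∀ (i : B) (t : ℕ), t + 1 < T →
      (θ * pi (t+1) - pi t = θ * lbp i (t+1) - lbp i t + ΔT * σp⁻¹ * lc i t ∧
       θ * pi (t+1) - pi t = lbm i t - θ * lbm i (t+1) + ΔT * σm * lc i t ∧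
       (lbp i t = 0 → lbp i (t+1) = 0 → lbm i t = 0 → lbm i (t+1) = 0 → lc i t = 0 →
         pi (t+1) = θ⁻¹ * pi t)) := by
  intro i t ht
  have discharge := discounted_stationarity_step (ΔT * σp⁻¹) θ (hstatp i) ht
  have charge : θ * pi (t+1) - pi t = lbm i t - θ * lbm i (t+1) + ΔT * σm * lc i t := by
    rw [discounted_stationarity_step (a := fun t => -lbm i t) (ΔT * σm) θ (hstatm i) ht]
    ring
  refine ⟨discharge, charge, fun hp₀ hp₁ _ _ hc₀ => ?_⟩
  rw [hp₀, hp₁, hc₀] at discharge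
  rw [eq_inv_mul_iff_mul_eq₀ hθ.ne']
  linarith
end
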